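/- arXiv:2203.13543 — 3 statements merged into one kernel-verified Lean document; each statement's English description precedes it below -/
import Mathlib

section
/- Let σ = σ₁⋯σ_n be a word of length n and r a natural number not occurring in σ. If i (with 0 ≤ i ≤ n) is an LR-space of σ relative to r, then des(σ^{(i)}(r)) = des(σ) + 1. -/
open Polynomial List

/-- The set of (1-indexed) descents of a word `w`: indices `i` with
`1 ≤ i ≤ length w - 1` and `w_i > w_{i+1}`. -/
def descents (w : List ℕ) : Finset ℕ :=
  (Finset.Ico 1 w.length).filter (fun i => w.getD i 0 < w.getD (i - 1) 0)

/-- The number of descents of a word. -/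
def des (w : List ℕ) : ℕ := (descents w).card

/-- The major index of a word: the sum of its descents. -/
def maj (w : List ℕ) : ℕ := ∑ i ∈ descents w, i

/-- `dge i w` is the number of descents of `w` that are `≥ i`. -/
def dge (i : ℕ) (w : List ℕ) : ℕ := ((descents w).filter (fun j => i ≤ j)).card

/-- `α` is a shuffle of the disjoint words `σ` and `π`. -/
def IsShuffle (σ π α : List ℕ) : Prop :=
  α.length = σ.length + π.length ∧ σ.Sublist α ∧ π.Sublist α

/-- `ins σ i r` is `σ^{(i)}(r)`, the word obtained by inserting `r`
immediately before `σ_{i+1}` (after `σ_n` when `i = n`). -/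
def ins (σ : List ℕ) (i r : ℕ) : List ℕ := σ.insertIdx i r

/-- The major increment `im(σ,i,r) = maj(σ^{(i)}(r)) - maj(σ)`. -/
def im (σ : List ℕ) (i r : ℕ) : ℤ := (maj (ins σ i r) : ℤ) - (maj σ : ℤ)

/-- The space `i` (for `0 ≤ i ≤ n`) is an RL-space of `σ` relative to `r`. -/
def IsRL (σ : List ℕ) (r i : ℕ) : Prop :=
  (i = σ.length ∧ ∀ x ∈ σ.getLast?, x < r) ∨
  (i = 0 ∧ ∀ x ∈ σ.head?, r < x) ∨
  (0 < i ∧ i < σ.length ∧ r < σ.getD i 0 ∧ σ.getD i 0 < σ.getD (i - 1) 0) ∨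
  (0 < i ∧ i < σ.length ∧ σ.getD i 0 < σ.getD (i - 1) 0 ∧ σ.getD (i - 1) 0 < r) ∨
  (0 < i ∧ i < σ.length ∧ σ.getD (i - 1) 0 < r ∧ r < σ.getD i 0)

/-- The Gaussian binomial coefficient `[N choose M]_q`, as a polynomial in `q`:
`∏_{j=1}^{M} (1 - q^{N-M+j}) / ∏_{j=1}^{M} (1 - q^{j})` when `0 ≤ M ≤ N`, and `0` otherwise. -/
noncomputable def gauss (N M : ℤ) : Polynomial ℚ :=
  if 0 ≤ M ∧ M ≤ N then
    (∏ j ∈ Finset.Icc 1 M.toNat, (1 - (X : Polynomial ℚ) ^ (N - M + j).toNat)) /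
      (∏ j ∈ Finset.Icc 1 M.toNat, (1 - (X : Polynomial ℚ) ^ (j : ℕ)))
  else 0

/-- `delPrefix α π i` is `α^{(i)}`: the word obtained from `α` by deleting
the letters `π₁, …, π_i`. -/
def delPrefix (α π : List ℕ) (i : ℕ) : List ℕ :=
  α.filter (fun x => !((π.take i).contains x))

/-!
Whether `i` is a descent only depends on the adjacent letters `w_i, w_{i+1}`, so
`des (u ++ v) = des u + des v + [last u > first v]`. Inserting `r` at space `i` thus trades the
possible descent at the pair `σ_i σ_{i+1}` for those at `σ_i r` and `r σ_{i+1}`, and running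
through the five RL patterns shows that in every other configuration this trade gains exactly one
descent.
-/

theorem des_eq_sum_range (w : List ℕ) :
    des w = ∑ k ∈ Finset.range (w.length - 1), if w.getD (k + 1) 0 < w.getD k 0 then 1 else 0 := by
  rw [des, descents, Finset.card_filter, Finset.sum_Ico_eq_sum_range]
  simp only [Nat.add_sub_cancel, add_comm 1]

theorem des_nil : des [] = 0 := rfl

/-- The number of descents at the junction of a word ending in `a` with a word starting with `b`,
`none` standing for an empty word. -/
def junctionDes : Option ℕ → Option ℕ → ℕ
  | some a, some b => if b < a then 1 else 0
  | _, _ => 0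

theorem des_cons (a : ℕ) (l : List ℕ) : des (a :: l) = junctionDes (some a) l.head? + des l := by
  cases l with
  | nil => rfl
  | cons b t =>
    simp only [des_eq_sum_range, length_cons, Nat.add_sub_cancel, Finset.sum_range_succ',
      getD_cons_succ, getD_cons_zero, head?_cons, junctionDes]
    omega

theorem des_append (u v : List ℕ) :
    des (u ++ v) = des u + des v + junctionDes u.getLast? v.head? := by
  induction u with
  | nil => simp [des_nil, junctionDes]
  | cons a u ih =>
    cases u with
    | nil => simp [des_cons, des_nil, junctionDes, add_comm]
    | cons b t =>
      rw [cons_append, des_cons, ih, des_cons a (b :: t), getLast?_cons_cons]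
      simp only [cons_append, head?_cons]
      omega

theorem List.insertIdx_eq_take_append_cons_drop {α : Type*} (x : α) :
    ∀ (l : List α) (i : ℕ), i ≤ l.length → l.insertIdx i x = l.take i ++ x :: l.drop i
  | _, 0, _ => rfl
  | a :: l, i + 1, h => by
    rw [insertIdx_succ_cons, insertIdx_eq_take_append_cons_drop x l i (by simpa using h)]
    rfl

theorem des_ins_add_junctionDes (σ : List ℕ) (r : ℕ) {i : ℕ} (hi : i ≤ σ.length) :
    des (ins σ i r) + junctionDes (σ.take i).getLast? (σ.drop i).head? =
      des σ + junctionDes (σ.take i).getLast? (some r) + junctionDes (some r) (σ.drop i).head? := by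
  have hσ := des_append (σ.take i) (σ.drop i)
  rw [take_append_drop] at hσ
  rw [ins, List.insertIdx_eq_take_append_cons_drop r σ i hi, des_append, des_cons, hσ]
  simp only [head?_cons]
  omega

theorem junctionDes_add_of_not_isRL {σ : List ℕ} {r i : ℕ} (hi : i ≤ σ.length) (hr : r ∉ σ)
    (h : ¬ IsRL σ r i) :
    junctionDes (σ.take i).getLast? (some r) + junctionDes (some r) (σ.drop i).head? =
      junctionDes (σ.take i).getLast? (σ.drop i).head? + 1 := by
  rcases Nat.eq_zero_or_pos i with rfl | hi0
  · cases σ with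
    | nil => exact absurd (Or.inl ⟨rfl, by simp⟩) h
    | cons b t =>
      have hbr : b < r := by
        refine lt_of_le_of_ne (not_lt.1 fun hrb => h (Or.inr (Or.inl ⟨rfl, ?_⟩)))
          fun hbr => hr (hbr ▸ mem_cons_self)
        simpa using hrb
      simp [junctionDes, hbr]
  rcases hi.lt_or_eq with hlt | rfl
  · have hlt' : i - 1 < σ.length := by omega
    have ha : (σ.take i).getLast? = some σ[i - 1] := by
      rw [getLast?_take, if_neg hi0.ne', getElem?_eq_getElem hlt', Option.some_or]
    have hb : (σ.drop i).head? = some σ[i] := by rw [head?_drop, getElem?_eq_getElem hlt]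
    have hra : r ≠ σ[i - 1] := fun h => hr (h ▸ getElem_mem hlt')
    have hrb : r ≠ σ[i] := fun h => hr (h ▸ getElem_mem hlt)
    simp only [IsRL, getD_eq_getElem _ _ hlt, getD_eq_getElem _ _ hlt', hi0, hlt, hi0.ne',
      hlt.ne, true_and, false_and, false_or, not_or, not_and_or, not_lt] at h
    rw [ha, hb]
    simp only [junctionDes]
    split_ifs <;> omega
  · have hσ : σ ≠ [] := by rintro rfl; simp at hi0
    have hlast := getLast?_eq_some_getLast hσ
    have hrl : r < σ.getLast hσ := by
      refine lt_of_le_of_ne (not_lt.1 fun hlr => h (Or.inl ⟨rfl, ?_⟩))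
        fun hrl => hr (hrl ▸ getLast_mem hσ)
      simpa [hlast] using hlr
    simp [junctionDes, hlast, hrl]

theorem lr_space_des_general (n : ℕ) (σ : List ℕ) (hσl : σ.length = n)
    (r : ℕ) (hr : r ∉ σ) (i : ℕ) (hi : i ≤ n) (hLR : ¬ IsRL σ r i) :
    des (ins σ i r) = des σ + 1 := by
  subst hσl
  have hins := des_ins_add_junctionDes σ r hi
  have hjunction := junctionDes_add_of_not_isRL hi hr hLR
  omega

/-- Inserting into an LR-space increases the number of descents by one. -/
theorem lr_space_des (n : ℕ) (σ : List ℕ) (hσl : σ.length = n) (hσnd : σ.Nodup)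
    (r : ℕ) (hr : r ∉ σ) (i : ℕ) (hi : i ≤ n) (hLR : ¬ IsRL σ r i) :
    des (ins σ i r) = des σ + 1 :=
  lr_space_des_general n σ hσl r hr i hi hLR
end

section
/- Let σ = σ₁⋯σ_n be a word of length n with des(σ) = k and r a natural number not occurring in σ, and set l = k + 1. Then the map i ↦ im(σ,i,r) = maj(σ^{(i)}(r)) − maj(σ), restricted to the RL-spaces of σ relative to r, is a strictly order-reversing bijection from the RL-spaces onto {0, 1, …, l−1}, and restricted to the LR-spaces it is a strictly order-preserving bijection from the LR-spaces onto {l, l+1, …, n}. In particular, if i is a space with canonical label a (RL-spaces labelled right to left by 0,…,l−1 and LR-spaces labelled left to right by l,…,n), then maj(σ^{(i)}(r)) = a + maj(σ). -/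
open Polynomial List

/-!
Inserting `r` into space `i` keeps the descents of `σ` left of `i`, shifts those right of `i`
by one, and creates or destroys descents only at the two new adjacencies. This gives
`im(σ,i,r) = dge(i+1, σ) + [σ_{i+1} < r]` when `i` is an RL-space, and `i` more when it is
an LR-space. A case check on the relative order of `σ_i`, `σ_{i+1}` and `r` shows that the
number of RL-spaces to the right of `i` obeys the same downward recursion as
`dge(i+1, σ) + [σ_{i+1} < r]`, so the two agree; in particular there are `des σ + 1`
RL-spaces. Hence `im` is the number of RL-spaces to the right on RL-spaces and
`des σ + 1` plus the number of LR-spaces to the left on LR-spaces, and both bijections are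
instances of counting the elements of a finite set below or above a point.
-/

namespace Finset

section LinearOrder

variable {α : Type*} [LinearOrder α] (s : Finset α)

theorem card_filter_lt_lt_card {i : α} (hi : i ∈ s) : (s.filter (· < i)).card < s.card :=
  card_lt_card (filter_ssubset.2 ⟨i, hi, lt_irrefl i⟩)

theorem card_filter_gt_lt_card {i : α} (hi : i ∈ s) : (s.filter (i < ·)).card < s.card :=
  card_lt_card (filter_ssubset.2 ⟨i, hi, lt_irrefl i⟩)

theorem strictMonoOn_card_filter_lt : StrictMonoOn (fun i => (s.filter (· < i)).card) s := by
  intro i hi j _ hij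
  refine card_lt_card ((ssubset_iff_of_subset ?_).2 ⟨i, mem_filter.2 ⟨hi, hij⟩, by simp⟩)
  exact monotone_filter_right s fun x _ hx => hx.trans hij

theorem strictAntiOn_card_filter_gt : StrictAntiOn (fun i => (s.filter (i < ·)).card) s := by
  intro i _ j hj hij
  refine card_lt_card ((ssubset_iff_of_subset ?_).2 ⟨j, mem_filter.2 ⟨hj, hij⟩, by simp⟩)
  exact monotone_filter_right s fun x _ hx => hij.trans hx

theorem card_filter_lt_add_card_filter_gt {i : α} (hi : i ∉ s) :
    (s.filter (· < i)).card + (s.filter (i < ·)).card = s.card := by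
  rw [← card_filter_add_card_filter_not (s := s) (· < i)]
  congr 2
  refine filter_congr fun j hj => ?_
  rw [not_lt, le_iff_lt_or_eq, or_iff_left fun h : i = j => hi (h ▸ hj)]

theorem card_filter_le_eq_card_filter_lt_add (i : α) :
    (s.filter (i ≤ ·)).card = (s.filter (i < ·)).card + if i ∈ s then 1 else 0 := by
  simp only [card_filter, ← sum_ite_eq s i (fun _ => 1), ← sum_add_distrib]
  refine sum_congr rfl fun j _ => ?_
  rcases lt_trichotomy i j with h | rfl | h
  · simp [h.le, h, h.ne]
  · simp
  · simp [not_le.2 h, not_lt.2 h.le, h.ne']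

end LinearOrder

theorem card_range_filter_lt_add_card_range_filter_not_lt {N i : ℕ} (p : ℕ → Prop)
    [DecidablePred p] [∀ x, Decidable (¬p x)] (hi : i ≤ N) :
    (((range N).filter p).filter (· < i)).card +
      (((range N).filter (fun x => ¬p x)).filter (· < i)).card = i := by
  rw [filter_comm, filter_comm (p := fun x => ¬p x), card_filter_add_card_filter_not]
  convert card_range i using 2
  ext j
  simp only [mem_filter, mem_range]
  omega

theorem image_eq_Icc_of_injOn {α : Type*} {s : Finset α} {f : α → ℤ} {a b : ℤ}
    (hf : Set.InjOn f s) (hmaps : ∀ x ∈ s, a ≤ f x ∧ f x ≤ b)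
    (hcard : a + s.card = b + 1) :
    s.image f = Icc a b := by
  refine eq_of_subset_of_card_le (fun y hy => ?_) ?_
  · obtain ⟨x, hx, rfl⟩ := mem_image.1 hy
    exact mem_Icc.2 (hmaps x hx)
  · rw [card_image_of_injOn hf, Int.card_Icc]
    omega

end Finset

section Insertion

variable {σ : List ℕ} {i p r : ℕ}

theorem length_ins (hi : i ≤ σ.length) : (ins σ i r).length = σ.length + 1 :=
  List.length_insertIdx_of_le_length hi r

theorem getD_ins_of_lt (hi : i ≤ σ.length) (hp : p < i) :
    (ins σ i r).getD p 0 = σ.getD p 0 := by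
  rw [List.getD_eq_getElem _ _ (by rw [length_ins hi]; omega),
    List.getD_eq_getElem _ _ (by omega)]
  exact List.getElem_insertIdx_of_lt hp _

theorem getD_ins_self (hi : i ≤ σ.length) : (ins σ i r).getD i 0 = r := by
  rw [List.getD_eq_getElem _ _ (by rw [length_ins hi]; omega)]
  exact List.getElem_insertIdx_self _

theorem getD_ins_succ (hi : i ≤ σ.length) (hp : i ≤ p) :
    (ins σ i r).getD (p + 1) 0 = σ.getD p 0 := by
  obtain ⟨k, rfl⟩ := Nat.exists_eq_add_of_le hp
  rcases lt_or_ge (i + k) σ.length with h | h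
  · rw [List.getD_eq_getElem _ _ (by rw [length_ins hi]; omega), List.getD_eq_getElem _ _ h]
    exact List.getElem_insertIdx_add_succ σ r i k h
  · rw [List.getD_eq_default _ _ (by rw [length_ins hi]; omega), List.getD_eq_default _ _ h]

theorem mem_descents : p ∈ descents σ ↔ p < σ.length ∧ σ.getD p 0 < σ.getD (p - 1) 0 := by
  simp only [descents, Finset.mem_filter, Finset.mem_Ico]
  refine ⟨fun ⟨⟨_, h⟩, h'⟩ => ⟨h, h'⟩, fun ⟨h, h'⟩ => ⟨⟨?_, h⟩, h'⟩⟩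
  rcases p with _ | p
  · exact absurd h' (lt_irrefl _)
  · omega

theorem descents_eq_filter_range (w : List ℕ) :
    descents w = (Finset.range w.length).filter (fun p => w.getD p 0 < w.getD (p - 1) 0) := by
  ext p
  rw [mem_descents, Finset.mem_filter, Finset.mem_range]

theorem maj_eq_sum_range (w : List ℕ) :
    maj w = ∑ p ∈ Finset.range w.length, if w.getD p 0 < w.getD (p - 1) 0 then p else 0 := by
  rw [maj, descents_eq_filter_range, Finset.sum_filter]

theorem dge_eq_sum_Ico (m : ℕ) (w : List ℕ) :
    dge m w = ∑ p ∈ Finset.Ico m w.length, if w.getD p 0 < w.getD (p - 1) 0 then 1 else 0 := by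
  rw [dge, ← Finset.card_filter]
  congr 1
  ext p
  simp only [Finset.mem_filter, mem_descents, Finset.mem_Ico]
  tauto

theorem dge_eq_dge_succ_add (m : ℕ) (w : List ℕ) :
    dge m w = dge (m + 1) w + if m ∈ descents w then 1 else 0 :=
  Finset.card_filter_le_eq_card_filter_lt_add _ m

theorem dge_one (w : List ℕ) : dge 1 w = des w := by
  rw [dge, des, Finset.filter_true_of_mem]
  intro p hp
  by_contra h
  simp [show p = 0 by omega, mem_descents] at hp

theorem maj_ins_add (hi : i ≤ σ.length) :
    maj (ins σ i r) + (if i ∈ descents σ then i else 0) =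
      maj σ + dge (i + 1) σ + (if r < σ.getD (i - 1) 0 then i else 0) +
        (if i < σ.length ∧ σ.getD i 0 < r then i + 1 else 0) := by
  set τ := ins σ i r
  set n := σ.length
  have hτ : maj τ = (∑ p ∈ Finset.range i, if σ.getD p 0 < σ.getD (p - 1) 0 then p else 0) +
      ((if r < σ.getD (i - 1) 0 then i else 0) +
        ∑ p ∈ Finset.Ico i n, if σ.getD p 0 < τ.getD p 0 then p + 1 else 0) := by
    rw [maj_eq_sum_range, length_ins hi,
      ← Finset.sum_range_add_sum_Ico (M := ℕ) _ (by omega : i ≤ n + 1),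
      Finset.sum_eq_sum_Ico_succ_bot (by omega : i < n + 1), ← Finset.sum_Ico_add' _ i n 1,
      getD_ins_self hi]
    congr 1
    on_goal 2 => congr 1
    · refine Finset.sum_congr rfl fun p hp => ?_
      have hp := Finset.mem_range.1 hp
      rw [getD_ins_of_lt hi hp, getD_ins_of_lt hi (by omega)]
    · rcases Nat.eq_zero_or_pos i with rfl | h0
      · simp
      · rw [getD_ins_of_lt hi (by omega)]
    · refine Finset.sum_congr rfl fun p hp => ?_
      rw [getD_ins_succ hi (Finset.mem_Ico.1 hp).1, Nat.add_sub_cancel]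
  have hσ : maj σ = (∑ p ∈ Finset.range i, if σ.getD p 0 < σ.getD (p - 1) 0 then p else 0) +
      ∑ p ∈ Finset.Ico i n, if σ.getD p 0 < σ.getD (p - 1) 0 then p else 0 := by
    rw [maj_eq_sum_range, Finset.sum_range_add_sum_Ico _ hi]
  rcases hi.lt_or_eq with hlt | rfl
  · have hshift :
        (∑ p ∈ Finset.Ico (i + 1) n, if σ.getD p 0 < τ.getD p 0 then p + 1 else 0) =
        (∑ p ∈ Finset.Ico (i + 1) n, if σ.getD p 0 < σ.getD (p - 1) 0 then p else 0) +
          dge (i + 1) σ := by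
      rw [dge_eq_sum_Ico, ← Finset.sum_add_distrib]
      refine Finset.sum_congr rfl fun p hp => ?_
      have hp := (Finset.mem_Ico.1 hp).1
      obtain ⟨q, rfl⟩ : ∃ q, p = q + 1 := ⟨p - 1, by omega⟩
      rw [getD_ins_succ hi (by omega), Nat.add_sub_cancel]
      split_ifs <;> rfl
    rw [hτ, hσ, Finset.sum_eq_sum_Ico_succ_bot hlt, Finset.sum_eq_sum_Ico_succ_bot hlt, hshift,
      getD_ins_self hi]
    simp only [mem_descents, hlt, true_and]
    split_ifs <;> omega
  · have hdes : n ∉ descents σ := fun h => lt_irrefl n (mem_descents.1 h).1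
    have hdge : dge (n + 1) σ = 0 := by
      rw [dge_eq_sum_Ico, Finset.Ico_eq_empty (by omega), Finset.sum_empty]
    rw [hτ, hσ, if_neg hdes, hdge, if_neg (lt_irrefl n ∘ And.left)]
    simp

end Insertion

section Spaces

open scoped Classical

variable {σ : List ℕ} {i j r : ℕ}

theorem getD_ne_of_notMem (hr : r ∉ σ) (hj : j < σ.length) : σ.getD j 0 ≠ r := by
  rw [List.getD_eq_getElem _ _ hj]
  rintro rfl
  exact hr (List.getElem_mem hj)

theorem getD_pred_ne (hnd : σ.Nodup) (h0 : 0 < j) (hj : j < σ.length) :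
    σ.getD (j - 1) 0 ≠ σ.getD j 0 := by
  rw [List.getD_eq_getElem _ _ hj, List.getD_eq_getElem _ _ (by omega)]
  intro h
  have := hnd.getElem_inj_iff.1 h
  omega

theorem isRL_zero_iff : IsRL σ r 0 ↔ σ = [] ∨ r < σ.getD 0 0 := by
  rcases σ with _ | ⟨a, σ⟩ <;> simp [IsRL]

theorem isRL_length_iff (h0 : 0 < σ.length) :
    IsRL σ r σ.length ↔ σ.getD (σ.length - 1) 0 < r := by
  have hlast : σ.getLast? = some (σ.getD (σ.length - 1) 0) := by
    rw [List.getLast?_eq_getElem?, List.getD_eq_getElem _ _ (by omega), List.getElem?_eq_getElem]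
  simp [IsRL, hlast, h0.ne']

theorem isRL_iff_of_pos_of_lt (h0 : 0 < j) (hj : j < σ.length) :
    IsRL σ r j ↔ (r < σ.getD j 0 ∧ σ.getD j 0 < σ.getD (j - 1) 0) ∨
      (σ.getD j 0 < σ.getD (j - 1) 0 ∧ σ.getD (j - 1) 0 < r) ∨
      (σ.getD (j - 1) 0 < r ∧ r < σ.getD j 0) := by
  simp [IsRL, hj.ne, hj, h0, h0.ne']

/-- In the paper's 1-indexed notation, for `1 ≤ j ≤ n`:
`[j is an RL-space] + [j < n ∧ σ_{j+1} < r] = [j is a descent] + [σ_j < r]`. -/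
theorem ite_isRL_add_ite (hnd : σ.Nodup) (hr : r ∉ σ) (h0 : 0 < j) (hj : j ≤ σ.length) :
    (if IsRL σ r j then 1 else 0) + (if j < σ.length ∧ σ.getD j 0 < r then 1 else 0) =
      (if j ∈ descents σ then 1 else 0) + (if σ.getD (j - 1) 0 < r then 1 else 0) := by
  have hprev := getD_ne_of_notMem hr (j := j - 1) (by omega)
  simp only [mem_descents]
  rcases hj.lt_or_eq with hlt | rfl
  · have hcur := getD_ne_of_notMem hr hlt
    have hstep := getD_pred_ne hnd h0 hlt
    rw [isRL_iff_of_pos_of_lt h0 hlt]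
    split_ifs <;> omega
  · rw [isRL_length_iff h0]
    split_ifs <;> omega

noncomputable def rlSpaces (σ : List ℕ) (r : ℕ) : Finset ℕ :=
  (Finset.range (σ.length + 1)).filter (fun i => IsRL σ r i)

noncomputable def lrSpaces (σ : List ℕ) (r : ℕ) : Finset ℕ :=
  (Finset.range (σ.length + 1)).filter (fun i => ¬ IsRL σ r i)

theorem mem_rlSpaces : i ∈ rlSpaces σ r ↔ i ≤ σ.length ∧ IsRL σ r i := by
  rw [rlSpaces, Finset.mem_filter, Finset.mem_range, Nat.lt_succ_iff]

theorem card_filter_rlSpaces_gt (hnd : σ.Nodup) (hr : r ∉ σ) (hi : i ≤ σ.length) :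
    ((rlSpaces σ r).filter (i < ·)).card =
      dge (i + 1) σ + if i < σ.length ∧ σ.getD i 0 < r then 1 else 0 := by
  induction hi using Nat.decreasingInduction with
  | self =>
    rw [Finset.filter_false_of_mem fun j hj => not_lt.2 (mem_rlSpaces.1 hj).1,
      dge_eq_sum_Ico, Finset.Ico_eq_empty (by omega)]
    simp
  | of_succ i hi ih =>
    have hstep := Finset.card_filter_le_eq_card_filter_lt_add (rlSpaces σ r) (i + 1)
    simp only [mem_rlSpaces, show i + 1 ≤ σ.length from hi, true_and] at hstep
    have hloc := ite_isRL_add_ite (j := i + 1) hnd hr i.succ_pos hi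
    rw [show (rlSpaces σ r).filter (i < ·) = (rlSpaces σ r).filter (i + 1 ≤ ·) from rfl,
      hstep, ih, dge_eq_dge_succ_add (i + 1)]
    simp only [Nat.add_sub_cancel, hi, true_and] at hloc ⊢
    omega

theorem card_rlSpaces (hnd : σ.Nodup) (hr : r ∉ σ) : (rlSpaces σ r).card = des σ + 1 := by
  have hsplit := Finset.card_filter_le_eq_card_filter_lt_add (rlSpaces σ r) 0
  rw [Finset.filter_true_of_mem fun j _ => Nat.zero_le j,
    card_filter_rlSpaces_gt hnd hr (Nat.zero_le _), dge_one] at hsplit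
  rw [hsplit]
  simp only [mem_rlSpaces, Nat.zero_le, true_and, isRL_zero_iff]
  by_cases hne : σ = []
  · simp [hne]
  · have hlen := List.length_pos_of_ne_nil hne
    have := getD_ne_of_notMem hr hlen
    simp only [hne, hlen, false_or, true_and]
    split_ifs <;> omega

theorem im_eq_card_filter_rlSpaces_gt_add (hnd : σ.Nodup) (hr : r ∉ σ) (hi : i ≤ σ.length) :
    im σ i r = ((rlSpaces σ r).filter (i < ·)).card + if IsRL σ r i then 0 else (i : ℤ) := by
  have hmaj := maj_ins_add (r := r) hi
  rw [im, card_filter_rlSpaces_gt hnd hr hi]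
  rcases Nat.eq_zero_or_pos i with rfl | h0
  · simp only [ite_self, add_zero, zero_add] at hmaj
    push_cast
    split_ifs at hmaj ⊢ <;> omega
  · have hloc := ite_isRL_add_ite hnd hr h0 hi
    have hprev := getD_ne_of_notMem hr (j := i - 1) (by omega)
    push_cast
    split_ifs at hmaj hloc ⊢ <;> omega

theorem card_rlSpaces_add_card_lrSpaces :
    (rlSpaces σ r).card + (lrSpaces σ r).card = σ.length + 1 := by
  rw [rlSpaces, lrSpaces, Finset.card_filter_add_card_filter_not, Finset.card_range]

theorem im_eq_of_mem_rlSpaces (hnd : σ.Nodup) (hr : r ∉ σ) (hi : i ∈ rlSpaces σ r) :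
    im σ i r = ((rlSpaces σ r).filter (i < ·)).card := by
  obtain ⟨hi, hrl⟩ := mem_rlSpaces.1 hi
  simpa [hrl] using im_eq_card_filter_rlSpaces_gt_add hnd hr hi

theorem im_eq_of_mem_lrSpaces (hnd : σ.Nodup) (hr : r ∉ σ) (hi : i ∈ lrSpaces σ r) :
    im σ i r = des σ + 1 + ((lrSpaces σ r).filter (· < i)).card := by
  obtain ⟨hi, hlr⟩ := Finset.mem_filter.1 hi
  have hsplit := Finset.card_filter_lt_add_card_filter_gt (rlSpaces σ r)
    fun h => hlr (mem_rlSpaces.1 h).2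
  have hbelow :
      ((rlSpaces σ r).filter (· < i)).card + ((lrSpaces σ r).filter (· < i)).card = i :=
    Finset.card_range_filter_lt_add_card_range_filter_not_lt _ (Finset.mem_range.1 hi).le
  rw [card_rlSpaces hnd hr] at hsplit
  rw [im_eq_card_filter_rlSpaces_gt_add hnd hr (Finset.mem_range_succ_iff.1 hi), if_neg hlr]
  omega

theorem strictAntiOn_im_rlSpaces (hnd : σ.Nodup) (hr : r ∉ σ) :
    StrictAntiOn (im σ · r) (rlSpaces σ r) := fun i hi j hj hij => by
  dsimp only
  rw [im_eq_of_mem_rlSpaces hnd hr hi, im_eq_of_mem_rlSpaces hnd hr hj]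
  exact_mod_cast Finset.strictAntiOn_card_filter_gt _ hi hj hij

theorem strictMonoOn_im_lrSpaces (hnd : σ.Nodup) (hr : r ∉ σ) :
    StrictMonoOn (im σ · r) (lrSpaces σ r) := fun i hi j hj hij => by
  dsimp only
  rw [im_eq_of_mem_lrSpaces hnd hr hi, im_eq_of_mem_lrSpaces hnd hr hj]
  have := Finset.strictMonoOn_card_filter_lt _ hi hj hij
  dsimp only at this
  omega

theorem image_im_rlSpaces (hnd : σ.Nodup) (hr : r ∉ σ) :
    (rlSpaces σ r).image (im σ · r) = Finset.Icc 0 (des σ : ℤ) := by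
  refine Finset.image_eq_Icc_of_injOn (strictAntiOn_im_rlSpaces hnd hr).injOn (fun i hi => ?_)
    (by rw [card_rlSpaces hnd hr]; omega)
  have := Finset.card_filter_gt_lt_card _ hi
  rw [card_rlSpaces hnd hr] at this
  rw [im_eq_of_mem_rlSpaces hnd hr hi]
  omega

theorem image_im_lrSpaces (hnd : σ.Nodup) (hr : r ∉ σ) :
    (lrSpaces σ r).image (im σ · r) = Finset.Icc (des σ + 1 : ℤ) σ.length := by
  have hcard := card_rlSpaces_add_card_lrSpaces (σ := σ) (r := r)
  rw [card_rlSpaces hnd hr] at hcard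
  refine Finset.image_eq_Icc_of_injOn (strictMonoOn_im_lrSpaces hnd hr).injOn (fun i hi => ?_)
    (by omega)
  have := Finset.card_filter_lt_lt_card _ hi
  rw [im_eq_of_mem_lrSpaces hnd hr hi]
  omega

end Spaces

open scoped Classical in
/-- **The Insertion Lemma** (Haglund–Loehr–Remmel).  With `l = k + 1`, the major
increment `i ↦ im(σ,i,r)` is a strictly order-reversing bijection from the RL-spaces
onto `{0, …, l-1}` and a strictly order-preserving bijection from the LR-spaces onto
`{l, …, n}`; in particular, a space with canonical label `a` (RL-spaces labelled right
to left by `0,…,l-1`, LR-spaces labelled left to right by `l,…,n`) satisfies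
`maj(σ^{(i)}(r)) = a + maj(σ)`. -/
theorem insertion_lemma (n k : ℕ) (σ : List ℕ) (hσl : σ.length = n) (hσnd : σ.Nodup)
    (hk : des σ = k) (r : ℕ) (hr : r ∉ σ) :
    letI RL : Finset ℕ := (Finset.range (n + 1)).filter (fun i => IsRL σ r i)
    letI LR : Finset ℕ := (Finset.range (n + 1)).filter (fun i => ¬ IsRL σ r i)
    (∀ i ∈ RL, ∀ j ∈ RL, i < j → im σ j r < im σ i r) ∧
    RL.image (fun i => im σ i r) = Finset.Icc (0 : ℤ) (k : ℤ) ∧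
    (∀ i ∈ LR, ∀ j ∈ LR, i < j → im σ i r < im σ j r) ∧
    LR.image (fun i => im σ i r) = Finset.Icc ((k : ℤ) + 1) (n : ℤ) ∧
    (∀ i ∈ RL, im σ i r = ((RL.filter (fun j => i < j)).card : ℤ)) ∧
    (∀ i ∈ LR, im σ i r = (k : ℤ) + 1 + ((LR.filter (fun j => j < i)).card : ℤ)) := by
  subst hσl hk
  rw [show (Finset.range (σ.length + 1)).filter (fun i => IsRL σ r i) = rlSpaces σ r from rfl,
    show (Finset.range (σ.length + 1)).filter (fun i => ¬ IsRL σ r i) = lrSpaces σ r from rfl]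
  exact ⟨strictAntiOn_im_rlSpaces hσnd hr, image_im_rlSpaces hσnd hr,
    strictMonoOn_im_lrSpaces hσnd hr, image_im_lrSpaces hσnd hr,
    fun _ => im_eq_of_mem_rlSpaces hσnd hr, fun _ => im_eq_of_mem_lrSpaces hσnd hr⟩
end

section
/- Let σ be a word of length m, π = π₁⋯π_n a word disjoint from σ, and α a shuffle of σ and π. For 0 ≤ i ≤ n let α^{(i)} be the word obtained from α by deleting π₁, …, π_i, and for 1 ≤ i ≤ n set t(i) = maj(α^{(i−1)}) − maj(α^{(i)}) − d_i(π). Then 0 ≤ t(i) ≤ m for every 1 ≤ i ≤ n. -/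
open Polynomial List

/-!
Write `α^{(i-1)} = s ++ r :: u` with `r = πᵢ`, so that `α^{(i)} = s ++ u` and `πᵢ₊₁ ⋯ π_n` is a
subword of `u`. Inserting `r` into `s ++ u` shifts every descent to its right by one and creates or
destroys at most one descent, so `maj (s ++ r :: u) - maj (s ++ u) = des (r :: u) + e` with
`0 ≤ e ≤ |s|`. On the other hand `d_i(π) = des (πᵢ ⋯ π_n)`, and deleting a letter never creates a
descent and destroys at most one, so `0 ≤ des (r :: u) - d_i(π) ≤ |u| - (n - i)`. Hence
`0 ≤ t(i) ≤ |s| + |u| - (n - i) = m`.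
-/

lemma mem_descents_s13 {w : List ℕ} {i : ℕ} :
    i ∈ descents w ↔ 1 ≤ i ∧ i < w.length ∧ w.getD i 0 < w.getD (i - 1) 0 := by
  simp [descents, and_assoc]

lemma zero_notMem_descents (w : List ℕ) : 0 ∉ descents w := by simp [mem_descents_s13]

lemma descents_of_length_le_one {w : List ℕ} (h : w.length ≤ 1) : descents w = ∅ := by
  ext i; simp only [mem_descents_s13, Finset.notMem_empty, iff_false]; omega

lemma descents_cons_cons (a b : ℕ) (l : List ℕ) :
    descents (a :: b :: l) =
      (if b < a then {1} else ∅) ∪ (descents (b :: l)).map (addRightEmbedding 1) := by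
  ext (_ | _ | j) <;> split_ifs <;> simp [mem_descents_s13, *]

lemma disjoint_descents_cons_cons (a b : ℕ) (l : List ℕ) :
    Disjoint (if b < a then {1} else ∅) ((descents (b :: l)).map (addRightEmbedding 1)) := by
  split_ifs <;> simp [zero_notMem_descents]

lemma des_singleton (a : ℕ) : des [a] = 0 := by simp [des, descents_of_length_le_one]

lemma des_cons_cons (a b : ℕ) (l : List ℕ) :
    des (a :: b :: l) = (if b < a then 1 else 0) + des (b :: l) := by
  rw [des, descents_cons_cons, Finset.card_union_of_disjoint (disjoint_descents_cons_cons a b l),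
    Finset.card_map]
  split_ifs <;> rfl

lemma maj_cons (a : ℕ) (l : List ℕ) : maj (a :: l) = maj l + des (a :: l) := by
  match l with
  | [] => simp [maj, des, descents_of_length_le_one]
  | b :: l =>
    rw [maj, descents_cons_cons, Finset.sum_union (disjoint_descents_cons_cons a b l),
      Finset.sum_map, des_cons_cons, des, maj]
    simp only [addRightEmbedding_apply, Finset.sum_add_distrib, Finset.sum_const, smul_eq_mul, mul_one]
    split_ifs <;> simp; ring

lemma dge_eq_des_drop (k : ℕ) (w : List ℕ) : dge (k + 1) w = des (w.drop k) := by
  induction k generalizing w with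
  | zero =>
    simp only [dge, des, List.drop_zero]
    congr 1
    exact Finset.filter_true_of_mem fun i hi => (mem_descents_s13.1 hi).1
  | succ k ih =>
    match w with
    | [] => simp [dge, des, descents_of_length_le_one]
    | [a] => simp [dge, des, descents_of_length_le_one]
    | a :: b :: l =>
      rw [List.drop_succ_cons, ← ih, dge, dge, descents_cons_cons, Finset.filter_union,
        Finset.card_union_of_disjoint (Finset.disjoint_filter_filter (disjoint_descents_cons_cons ..)),
        Finset.filter_map, Finset.card_map]
      split_ifs <;> simp

lemma des_cons_le_des_cons_cons (a b : ℕ) (l : List ℕ) : des (a :: l) ≤ des (a :: b :: l) := by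
  match l with
  | [] => simp [des_singleton]
  | c :: l => rw [des_cons_cons a c, des_cons_cons a b, des_cons_cons b c]; split_ifs <;> omega

lemma des_cons_cons_le_succ (a b : ℕ) (l : List ℕ) : des (a :: b :: l) ≤ des (a :: l) + 1 := by
  match l with
  | [] => rw [des_cons_cons, des_singleton, des_singleton]; split_ifs <;> omega
  | c :: l => rw [des_cons_cons a c, des_cons_cons a b, des_cons_cons b c]; split_ifs <;> omega

lemma des_cons_le_of_sublist {v u : List ℕ} (h : v <+ u) (a : ℕ) : des (a :: v) ≤ des (a :: u) := by
  induction h generalizing a with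
  | slnil => rfl
  | cons b _ ih => exact (ih a).trans (des_cons_le_des_cons_cons a b _)
  | cons_cons b _ ih => rw [des_cons_cons, des_cons_cons]; have := ih b; omega

lemma des_cons_add_length_le_of_sublist {v u : List ℕ} (h : v <+ u) (a : ℕ) :
    des (a :: u) + v.length ≤ des (a :: v) + u.length := by
  induction h generalizing a with
  | slnil => rfl
  | @cons _ l b _ ih =>
    have := des_cons_cons_le_succ a b l
    have := ih a
    simp only [List.length_cons]
    omega
  | cons_cons b _ ih =>
    rw [des_cons_cons, des_cons_cons]
    have := ih b
    simp only [List.length_cons]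
    omega

lemma maj_append_cons_bounds (s t : List ℕ) (r : ℕ) :
    maj (s ++ t) + des (r :: t) ≤ maj (s ++ r :: t) ∧
      maj (s ++ r :: t) ≤ maj (s ++ t) + des (r :: t) + s.length := by
  induction s with
  | nil => simp [maj_cons]
  | cons x s ih =>
    have hsub : s ++ t <+ s ++ r :: t := (List.sublist_cons_self r t).append_left s
    have hle := des_cons_le_of_sublist hsub x
    have hge := des_cons_add_length_le_of_sublist hsub x
    simp only [List.cons_append, maj_cons, List.length_append, List.length_cons] at *
    omega

lemma maj_append_cons_sub_bounds (s t u : List ℕ) (r : ℕ) (h : u <+ t) :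
    0 ≤ (maj (s ++ r :: t) : ℤ) - maj (s ++ t) - des (r :: u) ∧
      (maj (s ++ r :: t) : ℤ) - maj (s ++ t) - des (r :: u) ≤ s.length + t.length - u.length := by
  have hmaj := maj_append_cons_bounds s t r
  have hle := des_cons_le_of_sublist h r
  have hge := des_cons_add_length_le_of_sublist h r
  omega

lemma exists_eq_append_cons_of_cons_sublist {a : ℕ} {l w : List ℕ} (h : a :: l <+ w) :
    ∃ s t, w = s ++ a :: t ∧ l <+ t := by
  obtain ⟨w₁, w₂, rfl, ha, hl⟩ := List.cons_sublist_iff.1 h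
  obtain ⟨s, t, rfl⟩ := List.mem_iff_append.1 ha
  exact ⟨s, t ++ w₂, by simp, hl.trans (List.sublist_append_right t w₂)⟩

lemma IsShuffle.perm {σ π α : List ℕ} (hσ : σ.Nodup) (hπ : π.Nodup) (hσπ : σ.Disjoint π)
    (h : IsShuffle σ π α) : σ ++ π ~ α := by
  obtain ⟨hlen, hσα, hπα⟩ := h
  refine List.Subperm.perm_of_length_le ((hσ.append hπ hσπ).subperm ?_) (by simp [hlen])
  exact List.append_subset.2 ⟨hσα.subset, hπα.subset⟩

lemma delPrefix_of_disjoint {σ π : List ℕ} (h : σ.Disjoint π) (k : ℕ) : delPrefix σ π k = σ :=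
  List.filter_eq_self.2 fun a ha => by
    simpa using fun hk => h ha ((List.take_sublist k π).subset hk)

lemma delPrefix_self {π : List ℕ} (hπ : π.Nodup) (k : ℕ) : delPrefix π π k = π.drop k := by
  conv_lhs => rw [delPrefix, ← List.take_append_drop k π]
  rw [List.filter_append, List.filter_eq_nil_iff.2 (by simp), List.filter_eq_self.2]
  · rfl
  · intro a ha
    simpa using fun hk => List.disjoint_take_drop hπ le_rfl hk ha

lemma delPrefix_succ (α π : List ℕ) {k : ℕ} (hk : k < π.length) :
    delPrefix α π (k + 1) = (delPrefix α π k).filter (· != π[k]) := by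
  simp only [delPrefix, List.filter_filter, List.take_add_one, List.getElem?_eq_getElem hk,
    Option.toList_some, List.contains_append]
  congr 1
  funext x
  by_cases hx : x = π[k] <;> simp [hx]

lemma delPrefix_perm {σ π α : List ℕ} (hσπ : σ.Disjoint π) (hπ : π.Nodup) (h : σ ++ π ~ α)
    (k : ℕ) : σ ++ π.drop k ~ delPrefix α π k := by
  have := h.filter (fun x => !((π.take k).contains x))
  rwa [List.filter_append, ← delPrefix, ← delPrefix, ← delPrefix, delPrefix_of_disjoint hσπ,
    delPrefix_self hπ] at this

lemma drop_sublist_delPrefix {π α : List ℕ} (hπ : π.Nodup) (h : π <+ α) (k : ℕ) :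
    π.drop k <+ delPrefix α π k :=
  delPrefix_self hπ k ▸ h.filter _

/-- The statistics `t(i)` all lie between `0` and `m`. -/
theorem t_bounds (m n : ℕ) (σ π α : List ℕ)
    (hσl : σ.length = m) (hπl : π.length = n) (hσnd : σ.Nodup) (hπnd : π.Nodup)
    (hdisj : σ.Disjoint π) (hα : IsShuffle σ π α)
    (t : ℕ → ℤ)
    (ht : ∀ i, t i = (maj (delPrefix α π (i - 1)) : ℤ) - (maj (delPrefix α π i) : ℤ)
      - (dge i π : ℤ)) :
    ∀ i, 1 ≤ i → i ≤ n → 0 ≤ t i ∧ t i ≤ m := by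
  intro i hi hin
  obtain ⟨k, rfl⟩ : ∃ k, i = k + 1 := ⟨i - 1, by omega⟩
  have hk : k < π.length := by omega
  have hperm := hα.perm hσnd hπnd hdisj
  have hdrop := List.drop_eq_getElem_cons hk
  obtain ⟨s, u, hw, hsub⟩ := exists_eq_append_cons_of_cons_sublist
    (hdrop ▸ drop_sublist_delPrefix hπnd hα.2.2 k)
  have hwnd : (s ++ π[k] :: u).Nodup := hw ▸ (hperm.nodup_iff.1 (hσnd.append hπnd hdisj)).filter _
  have hnext : delPrefix α π (k + 1) = s ++ u := by
    rw [delPrefix_succ α π hk, hw, ← hwnd.erase_eq_filter, List.erase_append_right _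
      fun h => List.disjoint_of_nodup_append hwnd h List.mem_cons_self, List.erase_cons_head]
  have hlen := (delPrefix_perm hdisj hπnd hperm k).length_eq
  rw [ht, Nat.add_sub_cancel, dge_eq_des_drop, hdrop, hnext, hw]
  rw [hw, hdrop] at hlen
  have := maj_append_cons_sub_bounds s u (π.drop (k + 1)) π[k] hsub
  simp only [List.length_append, List.length_cons, List.length_drop] at hlen this
  omega
end
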